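/- arXiv:2510.18865 — 7 statements merged into one kernel-verified Lean document; each statement's English description precedes it below -/
import Mathlib

section
/- Let u₁,…,u_{k+1} be orthonormal in ℝ^m, R₁^{-1},…,R_{k+1}^{-1} symmetric positive definite, E_i^{(k)} := R_i^{-1} − R_{k+1}^{-1}, and 𝓔_{k+1}^{(k)} := R_{k+1}(Σ_{i=1}^{k+1} u_i u_iᵀ E_i^{(k)}) A. Then for every u in span{u₁,…,u_{k+1}}, (A + 𝓔_{k+1}^{(k)})ᵀ R_{k+1}^{-1} u = Aᵀ R̄_{k+1} u, where R̄_{k+1} = Σ_{i=1}^{k+1} R_i^{-1} u_i u_iᵀ. Hence the inexact Golub–Kahan relation (A+𝓔_{k+1}^{(k)})ᵀR_{k+1}^{-1}U_{k+1} = V_{k+1}T_{k+1} is equivalent to AᵀR̄_{k+1}U_{k+1} = V_{k+1}T_{k+1}. -/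
open Matrix

/-- The inexact Golub–Kahan perturbation `𝓔_{k+1}^{(k)} = R_{k+1}(Σ u_iu_iᵀE_i^{(k)})A`
with `E_i^{(k)} = R_i⁻¹ − R_{k+1}⁻¹` satisfies
`(A + 𝓔_{k+1}^{(k)})ᵀR_{k+1}⁻¹u = AᵀR̄_{k+1}u` for every `u ∈ span{u₁,…,u_{k+1}}`;
hence the inexact relation `(A+𝓔)ᵀR_{k+1}⁻¹U_{k+1} = V_{k+1}T_{k+1}` is equivalent to
`AᵀR̄_{k+1}U_{k+1} = V_{k+1}T_{k+1}`. -/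
theorem stmt3 (m n k : ℕ)
    (u : Fin (k + 1) → Fin m → ℝ)
    (hu : ∀ i j, u i ⬝ᵥ u j = if i = j then (1 : ℝ) else 0)
    (R Rinv : Fin (k + 1) → Matrix (Fin m) (Fin m) ℝ)
    (hR : ∀ i, (R i).PosDef)
    (hRinv : ∀ i, R i * Rinv i = 1) (hRinv' : ∀ i, Rinv i * R i = 1)
    (A : Matrix (Fin m) (Fin n) ℝ)
    (E : Fin (k + 1) → Matrix (Fin m) (Fin m) ℝ)
    (hE : ∀ i, E i = Rinv i - Rinv (Fin.last k))
    (Err : Matrix (Fin m) (Fin n) ℝ)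
    (hErr : Err = R (Fin.last k) * (∑ i, vecMulVec (u i) (u i) * E i) * A)
    (Rbar : Matrix (Fin m) (Fin m) ℝ)
    (hRbar : Rbar = ∑ i, Rinv i * vecMulVec (u i) (u i))
    (U : Matrix (Fin m) (Fin (k + 1)) ℝ) (hU : ∀ i j, U i j = u j i)
    (V : Matrix (Fin n) (Fin (k + 1)) ℝ)
    (T : Matrix (Fin (k + 1)) (Fin (k + 1)) ℝ) :
    (∀ c : Fin (k + 1) → ℝ,
        (A + Err)ᵀ *ᵥ (Rinv (Fin.last k) *ᵥ (∑ i, c i • u i))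
          = Aᵀ *ᵥ (Rbar *ᵥ (∑ i, c i • u i))) ∧
      ((A + Err)ᵀ * Rinv (Fin.last k) * U = V * T ↔ Aᵀ * Rbar * U = V * T) := by
  -- symmetry of R i
  have hRsym : ∀ i, (R i)ᵀ = R i := by
    intro i
    have := (hR i).isHermitian
    simpa [Matrix.IsHermitian, Matrix.conjTranspose_eq_transpose_of_trivial] using this
  -- symmetry of Rinv i
  have hRinvSym : ∀ i, (Rinv i)ᵀ = Rinv i := by
    intro i
    calc (Rinv i)ᵀ = (Rinv i)ᵀ * (R i * Rinv i) := by rw [hRinv i, mul_one]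
    _ = ((Rinv i)ᵀ * (R i)ᵀ) * Rinv i := by rw [← mul_assoc, hRsym i]
    _ = (R i * Rinv i)ᵀ * Rinv i := by rw [Matrix.transpose_mul]
    _ = Rinv i := by rw [hRinv i, Matrix.transpose_one, one_mul]
  have hEsym : ∀ i, (E i)ᵀ = E i := by
    intro i; rw [hE i, Matrix.transpose_sub, hRinvSym, hRinvSym]
  -- P * U = U
  have hPU : (∑ i, vecMulVec (u i) (u i)) * U = U := by
    ext a j
    simp only [Matrix.mul_apply, Matrix.sum_apply, vecMulVec_apply, Finset.sum_mul]
    rw [Finset.sum_comm]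
    have : ∀ i : Fin (k+1), ∑ b, u i a * u i b * U b j = u i a * (u i ⬝ᵥ u j) := by
      intro i
      simp [dotProduct, Finset.mul_sum, hU, mul_assoc]
    simp only [this, hu]
    simp [hU]
  -- key matrix identity
  have key : (A + Err)ᵀ * Rinv (Fin.last k) * U = Aᵀ * Rbar * U := by
    have hErrT : Errᵀ = Aᵀ * ((∑ i, E i * vecMulVec (u i) (u i)) * R (Fin.last k)) := by
      rw [hErr, Matrix.transpose_mul, Matrix.transpose_mul]
      congr 2
      · rw [Matrix.transpose_sum]
        apply Finset.sum_congr rfl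
        intro i _
        rw [Matrix.transpose_mul, hEsym]
        congr 1
        ext a b
        simp [vecMulVec_apply, mul_comm]
      · exact hRsym _
    have step1 : (A + Err)ᵀ * Rinv (Fin.last k)
        = Aᵀ * (Rinv (Fin.last k) + ∑ i, E i * vecMulVec (u i) (u i)) := by
      rw [Matrix.transpose_add, Matrix.add_mul, hErrT, Matrix.mul_assoc,
        Matrix.mul_assoc, hRinv (Fin.last k), mul_one, Matrix.mul_add]
    rw [step1, Matrix.mul_assoc, Matrix.mul_assoc]
    congr 1
    have expand : (∑ i, E i * vecMulVec (u i) (u i))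
        = Rbar - Rinv (Fin.last k) * (∑ i, vecMulVec (u i) (u i)) := by
      rw [hRbar, Finset.mul_sum, ← Finset.sum_sub_distrib]
      apply Finset.sum_congr rfl
      intro i _
      rw [hE i, Matrix.sub_mul]
    rw [Matrix.add_mul, expand, Matrix.sub_mul, Matrix.mul_assoc, hPU]
    abel
  constructor
  · intro c
    have hsum : (∑ i, c i • u i) = U *ᵥ c := by
      ext a
      simp [Matrix.mulVec, dotProduct, hU, Finset.sum_apply, mul_comm]
    rw [hsum, Matrix.mulVec_mulVec, Matrix.mulVec_mulVec, Matrix.mulVec_mulVec,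
      Matrix.mulVec_mulVec, key]
  · rw [key]
end

section
/- Suppose A V_k = U_{k+1} M_k and Aᵀ R^{-1} U_{k+1} = V_{k+1} B_{k+1}ᵀ with V_{k+1}, U_{k+1} having orthonormal columns, V_k the first k columns of V_{k+1}, r₀ = β u₁ with β = ‖r₀‖₂, and B_{k+1,k} = B_{k+1} without its last column equal to M_k. Then the Galerkin condition V_kᵀ Aᵀ R^{-1}(A V_k s_k − r₀) = 0 is equivalent to the projected system B_{k+1,k}ᵀ B_{k+1,k} s_k = α₁ β e₁, where α₁ = [B_{k+1}]_{1,1}. -/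
open Matrix

/-- Preconditioned Golub–Kahan: the Galerkin condition
`Vkᵀ Aᵀ R⁻¹ (A Vk s − r₀) = 0` is equivalent to the projected system
`B_{k+1,k}ᵀ B_{k+1,k} s = α₁ β e₁`. -/
theorem stmt5 (m n k : ℕ) (hk : 0 < k)
    (A : Matrix (Fin m) (Fin n) ℝ)
    (R : Matrix (Fin m) (Fin m) ℝ) (hR : R.PosDef)
    (U : Matrix (Fin m) (Fin (k + 1)) ℝ) (hU : Uᵀ * U = 1)
    (V : Matrix (Fin n) (Fin (k + 1)) ℝ) (hV : Vᵀ * V = 1)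
    (Vk : Matrix (Fin n) (Fin k) ℝ) (hVk : ∀ i j, Vk i j = V i j.castSucc)
    (B : Matrix (Fin (k + 1)) (Fin (k + 1)) ℝ)
    (hB : ∀ i j : Fin (k + 1), (i : ℕ) ≠ (j : ℕ) → (i : ℕ) ≠ (j : ℕ) + 1 → B i j = 0)
    (Bk : Matrix (Fin (k + 1)) (Fin k) ℝ) (hBk : ∀ i j, Bk i j = B i j.castSucc)
    (h1 : A * Vk = U * Bk) (h2 : Aᵀ * R⁻¹ * U = V * Bᵀ)
    (β : ℝ) (r0 : Fin m → ℝ) (hr0 : r0 = β • (fun i => U i 0))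
    (hβ : β = Real.sqrt (r0 ⬝ᵥ r0))
    (s : Fin k → ℝ) :
    (Vkᵀ * Aᵀ * R⁻¹) *ᵥ (A *ᵥ (Vk *ᵥ s) - r0) = 0 ↔
      (Bkᵀ * Bk) *ᵥ s = (B 0 0 * β) • (Pi.single (⟨0, hk⟩ : Fin k) 1 : Fin k → ℝ) := by
  set E : Matrix (Fin (k + 1)) (Fin k) ℝ :=
    Matrix.of (fun i j => if i = j.castSucc then (1 : ℝ) else 0) with hE
  have hVkE : Vk = V * E := by
    ext i j
    simp [hVk, hE, Matrix.mul_apply, mul_ite]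
  have hBkE : Bk = B * E := by
    ext i j
    simp [hBk, hE, Matrix.mul_apply, mul_ite]
  have hVkTV : Vkᵀ * V = Eᵀ := by
    rw [hVkE, Matrix.transpose_mul, Matrix.mul_assoc, hV, Matrix.mul_one]
  have key1 : Vkᵀ * Aᵀ * R⁻¹ * U = Bkᵀ := by
    rw [Matrix.mul_assoc, Matrix.mul_assoc, ← Matrix.mul_assoc Aᵀ, h2,
      ← Matrix.mul_assoc, hVkTV, hBkE, Matrix.transpose_mul]
  have key2 : Vkᵀ * Aᵀ * R⁻¹ * (A * Vk) = Bkᵀ * Bk := by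
    rw [h1, ← Matrix.mul_assoc, key1]
  have hr0' : r0 = β • (U *ᵥ (Pi.single (0 : Fin (k + 1)) 1)) := by
    funext i
    simp [hr0, Matrix.mulVec, dotProduct, Pi.single_apply, mul_ite]
  have hBkTe : Bkᵀ *ᵥ (Pi.single (0 : Fin (k + 1)) 1)
      = B 0 0 • (Pi.single (⟨0, hk⟩ : Fin k) 1 : Fin k → ℝ) := by
    funext j
    simp only [Matrix.mulVec, dotProduct, Matrix.transpose_apply, Pi.single_apply,
      mul_ite, mul_one, mul_zero, Finset.sum_ite_eq', Finset.mem_univ, if_true,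
      Pi.smul_apply, smul_eq_mul]
    by_cases hj : j = ⟨0, hk⟩
    · subst hj
      simp [hBk]
    · rw [if_neg hj, hBk]
      apply hB
      · intro h
        apply hj
        apply Fin.ext
        simpa using h.symm
      · simp
  have lhs_eq : (Vkᵀ * Aᵀ * R⁻¹) *ᵥ (A *ᵥ (Vk *ᵥ s) - r0)
      = (Bkᵀ * Bk) *ᵥ s - (B 0 0 * β) • (Pi.single (⟨0, hk⟩ : Fin k) 1 : Fin k → ℝ) := by
    rw [Matrix.mulVec_sub, Matrix.mulVec_mulVec, Matrix.mulVec_mulVec, Matrix.mul_assoc (Vkᵀ * Aᵀ * R⁻¹) A Vk, key2, hr0',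
      Matrix.mulVec_smul, Matrix.mulVec_mulVec, key1, hBkTe, smul_smul, mul_comm β]
  rw [lhs_eq, sub_eq_zero]
end

section
/- Under the inexact Golub–Kahan relations A V_k = U_{k+1} M_k and (A+𝓔_{k+1}^{(k)})ᵀ R_{k+1}^{-1} U_{k+1} = V_{k+1} T_{k+1}, with V_{k+1} having orthonormal columns whose first k columns form V_k, and r₀ = β u₁, the orthogonality condition V_kᵀ (A+𝓔_{k+1}^{(k)})ᵀ R_{k+1}^{-1}(A V_k s_k − r₀) = 0 is equivalent to T_{k,k+1} M_k s_k = β t_{1,1} e₁, where T_{k,k+1} is T_{k+1} without its last row and t_{1,1} = [T_{k+1}]_{1,1}. -/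
open Matrix

/-- Under the inexact Golub–Kahan relations, the orthogonality condition
`Vkᵀ (A+𝓔)ᵀ R⁻¹ (A Vk s − r₀) = 0` is equivalent to
`T_{k,k+1} M_k s = β t_{1,1} e₁`. -/
theorem stmt6 (m n k : ℕ) (hk : 0 < k)
    (A Err : Matrix (Fin m) (Fin n) ℝ)
    (R : Matrix (Fin m) (Fin m) ℝ) (hR : R.PosDef)
    (U : Matrix (Fin m) (Fin (k + 1)) ℝ) (hU : Uᵀ * U = 1)
    (V : Matrix (Fin n) (Fin (k + 1)) ℝ) (hV : Vᵀ * V = 1)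
    (Vk : Matrix (Fin n) (Fin k) ℝ) (hVk : ∀ i j, Vk i j = V i j.castSucc)
    (M : Matrix (Fin (k + 1)) (Fin k) ℝ)
    (T : Matrix (Fin (k + 1)) (Fin (k + 1)) ℝ)
    (hT : ∀ i j : Fin (k + 1), (j : ℕ) < (i : ℕ) → T i j = 0)
    (Tk : Matrix (Fin k) (Fin (k + 1)) ℝ) (hTk : ∀ i j, Tk i j = T i.castSucc j)
    (h1 : A * Vk = U * M) (h2 : (A + Err)ᵀ * R⁻¹ * U = V * T)
    (β : ℝ) (r0 : Fin m → ℝ) (hr0 : r0 = β • (fun i => U i 0))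
    (hβ : β = Real.sqrt (r0 ⬝ᵥ r0))
    (s : Fin k → ℝ) :
    (Vkᵀ * (A + Err)ᵀ * R⁻¹) *ᵥ (A *ᵥ (Vk *ᵥ s) - r0) = 0 ↔
      (Tk * M) *ᵥ s = (β * T 0 0) • (Pi.single (⟨0, hk⟩ : Fin k) 1 : Fin k → ℝ) := by
  -- Step 1: Vkᵀ * V entries
  have hVkV : ∀ (i : Fin k) (l : Fin (k+1)),
      (Vkᵀ * V) i l = (1 : Matrix (Fin (k+1)) (Fin (k+1)) ℝ) i.castSucc l := by
    intro i l
    have : (Vkᵀ * V) i l = (Vᵀ * V) i.castSucc l := by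
      simp [Matrix.mul_apply, hVk]
    rw [this, hV]
  -- Step 2: key matrix identity
  have hkey : Vkᵀ * ((A + Err)ᵀ * R⁻¹ * U) = Tk := by
    rw [h2, ← Matrix.mul_assoc]
    ext i j
    rw [Matrix.mul_apply, hTk]
    simp only [hVkV, Matrix.one_apply, ite_mul, one_mul, zero_mul]
    simp
  -- Step 3: vector identity
  have hvec : A *ᵥ (Vk *ᵥ s) - r0
      = U *ᵥ (M *ᵥ s - β • (Pi.single (0 : Fin (k+1)) 1 : Fin (k+1) → ℝ)) := by
    rw [Matrix.mulVec_sub, Matrix.mulVec_mulVec, h1, ← Matrix.mulVec_mulVec,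
      Matrix.mulVec_smul, Matrix.mulVec_single, hr0]
    simp
    rfl
  have hTe : Tk *ᵥ (Pi.single (0 : Fin (k+1)) 1 : Fin (k+1) → ℝ)
      = T 0 0 • (Pi.single (⟨0, hk⟩ : Fin k) 1 : Fin k → ℝ) := by
    ext i
    simp only [Matrix.mulVec_single_one, Matrix.col, Matrix.transpose_apply, mul_one, hTk, Pi.smul_apply]
    by_cases hi : i = ⟨0, hk⟩
    · subst hi
      have : (⟨0, hk⟩ : Fin k).castSucc = 0 := rfl
      rw [this]
      simp
    · have hi' : 0 < (i : ℕ) := Nat.pos_of_ne_zero (fun h => hi (Fin.ext h))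
      rw [hT _ _ (by simpa using hi'), Pi.single_eq_of_ne hi]
      simp
  -- Step 4: combine
  have hM : Vkᵀ * (A + Err)ᵀ * R⁻¹ * U = Tk := by
    calc Vkᵀ * (A + Err)ᵀ * R⁻¹ * U = Vkᵀ * ((A + Err)ᵀ * R⁻¹ * U) := by
          simp only [Matrix.mul_assoc]
      _ = Tk := hkey
  have hLHS : (Vkᵀ * (A + Err)ᵀ * R⁻¹) *ᵥ (A *ᵥ (Vk *ᵥ s) - r0)
      = (Tk * M) *ᵥ s - (β * T 0 0) • (Pi.single (⟨0, hk⟩ : Fin k) 1 : Fin k → ℝ) := by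
    rw [hvec, Matrix.mulVec_mulVec, hM, Matrix.mulVec_sub, Matrix.mulVec_smul, hTe,
      Matrix.mulVec_mulVec, smul_smul]
  rw [hLHS, sub_eq_zero]
end

section
/- Under the inexact Golub–Kahan relations above, the right-hand side of the projected inexact normal equations satisfies β t_{1,1} e₁ = V_kᵀ Aᵀ R₁^{-1} r₀; i.e., the projected right-hand side is always computed using the initial preconditioner R₁^{-1}, since (A+𝓔_{k+1}^{(k)})ᵀR_{k+1}^{-1}u₁ = AᵀR₁^{-1}u₁. -/
open Matrix
set_option maxHeartbeats 1000000 in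

/-- The projected right-hand side of the inexact normal equations is always computed
using the initial preconditioner: `β t_{1,1} e₁ = Vkᵀ Aᵀ R₁⁻¹ r₀`, since
`(A+𝓔_{k+1}^{(k)})ᵀ R_{k+1}⁻¹ u₁ = Aᵀ R₁⁻¹ u₁`. -/
theorem stmt7 (m n k : ℕ) (hk : 0 < k)
    (u : Fin (k + 1) → Fin m → ℝ)
    (hu : ∀ i j, u i ⬝ᵥ u j = if i = j then (1 : ℝ) else 0)
    (R Rinv : Fin (k + 1) → Matrix (Fin m) (Fin m) ℝ)
    (hR : ∀ i, (R i).PosDef)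
    (hRinv : ∀ i, R i * Rinv i = 1) (hRinv' : ∀ i, Rinv i * R i = 1)
    (A : Matrix (Fin m) (Fin n) ℝ)
    (Err : Matrix (Fin m) (Fin n) ℝ)
    (hErr : Err = R (Fin.last k)
      * (∑ i, vecMulVec (u i) (u i) * (Rinv i - Rinv (Fin.last k))) * A)
    (Vk : Matrix (Fin n) (Fin k) ℝ) (hVk : Vkᵀ * Vk = 1)
    (t11 : ℝ)
    (ht11 : Aᵀ *ᵥ (Rinv 0 *ᵥ u 0) = t11 • (fun i => Vk i ⟨0, hk⟩))
    (β : ℝ) (r0 : Fin m → ℝ) (hr0 : r0 = β • u 0) :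
    (β * t11) • (Pi.single (⟨0, hk⟩ : Fin k) 1 : Fin k → ℝ)
        = Vkᵀ *ᵥ (Aᵀ *ᵥ (Rinv 0 *ᵥ r0)) ∧
      (A + Err)ᵀ *ᵥ (Rinv (Fin.last k) *ᵥ u 0) = Aᵀ *ᵥ (Rinv 0 *ᵥ u 0) := by
  have hRsym : ∀ i, (R i)ᵀ = R i := by
    intro i
    ext a b
    have := congrFun (congrFun (hR i).1.eq a) b
    simpa [Matrix.conjTranspose_apply] using this
  -- Part 1
  have part1 : (β * t11) • (Pi.single (⟨0, hk⟩ : Fin k) 1 : Fin k → ℝ)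
      = Vkᵀ *ᵥ (Aᵀ *ᵥ (Rinv 0 *ᵥ r0)) := by
    have hcol : Vkᵀ *ᵥ (fun i => Vk i ⟨0, hk⟩)
        = (Pi.single (⟨0, hk⟩ : Fin k) 1 : Fin k → ℝ) := by
      ext j
      have h1 := congrFun (congrFun hVk j) ⟨0, hk⟩
      simp only [Matrix.mul_apply, Matrix.transpose_apply] at h1
      simp only [Matrix.mulVec, dotProduct, Matrix.transpose_apply]
      rw [h1]
      by_cases hj : j = (⟨0, hk⟩ : Fin k) <;>
        simp [Matrix.one_apply, hj, Pi.single_apply]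
    rw [hr0, Matrix.mulVec_smul, Matrix.mulVec_smul, ht11, Matrix.mulVec_smul,
      Matrix.mulVec_smul, hcol, smul_smul]
  refine ⟨part1, ?_⟩
  -- Part 2
  have hvv : ∀ (a b x : Fin m → ℝ), vecMulVec a b *ᵥ x = (b ⬝ᵥ x) • a := by
    intro a b x
    ext j
    simp only [Matrix.vecMulVec_apply, Matrix.mulVec, dotProduct, Pi.smul_apply,
      smul_eq_mul, Finset.sum_mul]
    exact Finset.sum_congr rfl fun _ _ => by ring
  have hErrT : Errᵀ *ᵥ (Rinv (Fin.last k) *ᵥ u 0)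
      = Aᵀ *ᵥ ((Rinv 0 - Rinv (Fin.last k))ᵀ *ᵥ u 0) := by
    rw [hErr]
    simp only [Matrix.transpose_mul]
    rw [← Matrix.mulVec_mulVec, ← Matrix.mulVec_mulVec]
    congr 1
    have h1 : (R (Fin.last k))ᵀ *ᵥ (Rinv (Fin.last k) *ᵥ u 0) = u 0 := by
      rw [hRsym, Matrix.mulVec_mulVec, hRinv, Matrix.one_mulVec]
    rw [h1, Matrix.transpose_sum]
    have hsum : ∀ (M : Fin (k+1) → Matrix (Fin m) (Fin m) ℝ) (v : Fin m → ℝ),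
        (∑ i, M i) *ᵥ v = ∑ i, M i *ᵥ v := by
      intro M v
      ext j
      simp only [Matrix.mulVec, dotProduct, Matrix.sum_apply, Finset.sum_apply,
        Finset.sum_mul]
      rw [Finset.sum_comm]
    rw [hsum]
    have h2 : ∀ i : Fin (k + 1),
        (vecMulVec (u i) (u i) * (Rinv i - Rinv (Fin.last k)))ᵀ *ᵥ u 0
        = (if i = 0 then (1:ℝ) else 0) • ((Rinv i - Rinv (Fin.last k))ᵀ *ᵥ u i) := by
      intro i
      rw [Matrix.transpose_mul, ← Matrix.mulVec_mulVec]
      have : (vecMulVec (u i) (u i))ᵀ = vecMulVec (u i) (u i) := by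
        ext a b; simp [Matrix.vecMulVec_apply, mul_comm]
      rw [this, hvv, hu i 0, Matrix.mulVec_smul]
    simp only [h2]
    rw [Finset.sum_eq_single 0]
    · simp
    · intro i _ hi; simp [hi]
    · simp
  have hRinvsym : (Rinv 0 - Rinv (Fin.last k))ᵀ = Rinv 0 - Rinv (Fin.last k) := by
    have hs : ∀ i, (Rinv i)ᵀ = Rinv i := by
      intro i
      calc (Rinv i)ᵀ = (Rinv i)ᵀ * (R i * Rinv i) := by rw [hRinv, mul_one]
        _ = ((Rinv i)ᵀ * (R i)ᵀ) * Rinv i := by rw [hRsym i, mul_assoc]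
        _ = (R i * Rinv i)ᵀ * Rinv i := by rw [Matrix.transpose_mul]
        _ = Rinv i := by rw [hRinv, Matrix.transpose_one, one_mul]
    rw [Matrix.transpose_sub, hs, hs]
  rw [Matrix.transpose_add, Matrix.add_mulVec, hErrT, hRinvsym,
    Matrix.sub_mulVec, Matrix.mulVec_sub]
  abel
end

section
/- With errors E_i^{(k)} = R_i^{-1} − R_{k+1}^{-1}, the difference between the exact gradient ∇g^{(k)}(x_k) = AᵀR_{k+1}^{-1}(Ax_k − r₀) and the inexact gradient (A+𝓔_{k+1}^{(k)})ᵀR_{k+1}^{-1}(Ax_k − r₀), with x_k = V_k s_k and s̄_k = M_k s_k, satisfies ‖∇g^{(k)}(x_k) − ∇̂g^{(k)}(x_k)‖ ≤ ‖AᵀE₁^{(k)}r₀‖ + Σ_{i=1}^{k+1} ‖AᵀE_i^{(k)}‖ · |[s̄_k]_i|. -/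
open Matrix

/-- Euclidean norm of a vector in `ℝ^d`. -/
noncomputable def enorm8 {d : ℕ} (v : Fin d → ℝ) : ℝ :=
  ‖(WithLp.equiv 2 (Fin d → ℝ)).symm v‖

/-- Euclidean operator norm of a matrix. -/
noncomputable def opnorm8 {a b : ℕ} (M : Matrix (Fin a) (Fin b) ℝ) : ℝ :=
  ‖LinearMap.toContinuousLinearMap (Matrix.toEuclideanLin M)‖

lemma enorm8_eq {d : ℕ} (v : Fin d → ℝ) :
    enorm8 v = ‖(WithLp.linearEquiv 2 ℝ (Fin d → ℝ)).symm v‖ := rfl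

lemma enorm8_mulVec_le {a b : ℕ} (M : Matrix (Fin a) (Fin b) ℝ) (v : Fin b → ℝ) :
    enorm8 (M *ᵥ v) ≤ opnorm8 M * enorm8 v := by
  have h := (LinearMap.toContinuousLinearMap (Matrix.toEuclideanLin M)).le_opNorm
    ((WithLp.equiv 2 (Fin b → ℝ)).symm v)
  simpa [enorm8, opnorm8] using h

lemma enorm8_smul {d : ℕ} (c : ℝ) (v : Fin d → ℝ) :
    enorm8 (c • v) = |c| * enorm8 v := by
  rw [enorm8_eq, enorm8_eq, LinearEquiv.map_smul, norm_smul, Real.norm_eq_abs]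

lemma enorm8_add_le {d : ℕ} (v w : Fin d → ℝ) :
    enorm8 (v + w) ≤ enorm8 v + enorm8 w := by
  rw [enorm8_eq, enorm8_eq, enorm8_eq, map_add]; exact norm_add_le _ _

lemma enorm8_sum_le {d : ℕ} {ι : Type*} (s : Finset ι) (f : ι → Fin d → ℝ) :
    enorm8 (∑ i ∈ s, f i) ≤ ∑ i ∈ s, enorm8 (f i) := by
  simp only [enorm8_eq, map_sum]
  exact norm_sum_le _ _

lemma vecMulVec_mulVec8 {a b : ℕ} (w : Fin a → ℝ) (v : Fin b → ℝ) (y : Fin b → ℝ) :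
    vecMulVec w v *ᵥ y = (v ⬝ᵥ y) • w := by
  ext j
  simp [vecMulVec_apply, Matrix.mulVec, dotProduct, Finset.mul_sum, mul_comm, mul_assoc,
    mul_left_comm]

lemma sum_mulVec8 {a b : ℕ} {ι : Type*} (s : Finset ι)
    (M : ι → Matrix (Fin a) (Fin b) ℝ) (v : Fin b → ℝ) :
    (∑ i ∈ s, M i) *ᵥ v = ∑ i ∈ s, M i *ᵥ v := by
  ext j
  simp only [Matrix.mulVec, dotProduct, Matrix.sum_apply, Finset.sum_apply, Finset.sum_mul]
  exact Finset.sum_comm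

lemma mulVec_sum8 {a b : ℕ} {ι : Type*} (s : Finset ι)
    (M : Matrix (Fin a) (Fin b) ℝ) (v : ι → Fin b → ℝ) :
    M *ᵥ (∑ i ∈ s, v i) = ∑ i ∈ s, M *ᵥ v i := by
  ext j
  simp only [Matrix.mulVec, dotProduct, Finset.sum_apply, Finset.mul_sum]
  exact Finset.sum_comm

/-- Inexactness estimate: the gap between the exact gradient
`AᵀR_{k+1}⁻¹(Ax_k − r₀)` and the inexact gradient `(A+𝓔)ᵀR_{k+1}⁻¹(Ax_k − r₀)`
is bounded by `‖AᵀE₁r₀‖ + Σᵢ ‖AᵀEᵢ‖ |[s̄_k]ᵢ|`. -/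
theorem stmt8 (m n k : ℕ)
    (u : Fin (k + 1) → Fin m → ℝ)
    (hu : ∀ i j, u i ⬝ᵥ u j = if i = j then (1 : ℝ) else 0)
    (R Rinv : Fin (k + 1) → Matrix (Fin m) (Fin m) ℝ)
    (hR : ∀ i, (R i).PosDef)
    (hRinv : ∀ i, R i * Rinv i = 1) (hRinv' : ∀ i, Rinv i * R i = 1)
    (E : Fin (k + 1) → Matrix (Fin m) (Fin m) ℝ)
    (hE : ∀ i, E i = Rinv i - Rinv (Fin.last k))
    (A : Matrix (Fin m) (Fin n) ℝ)
    (Err : Matrix (Fin m) (Fin n) ℝ)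
    (hErr : Err = R (Fin.last k) * (∑ i, vecMulVec (u i) (u i) * E i) * A)
    (U : Matrix (Fin m) (Fin (k + 1)) ℝ) (hU : ∀ i j, U i j = u j i)
    (Vk : Matrix (Fin n) (Fin k) ℝ)
    (M : Matrix (Fin (k + 1)) (Fin k) ℝ) (hAV : A * Vk = U * M)
    (β : ℝ) (r0 : Fin m → ℝ) (hr0 : r0 = β • u 0)
    (s : Fin k → ℝ) (x : Fin n → ℝ) (hx : x = Vk *ᵥ s)
    (sbar : Fin (k + 1) → ℝ) (hsbar : sbar = M *ᵥ s) :
    enorm8 (Aᵀ *ᵥ (Rinv (Fin.last k) *ᵥ (A *ᵥ x - r0))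
        - (A + Err)ᵀ *ᵥ (Rinv (Fin.last k) *ᵥ (A *ᵥ x - r0)))
      ≤ enorm8 (Aᵀ *ᵥ (E 0 *ᵥ r0)) + ∑ i, opnorm8 (Aᵀ * E i) * |sbar i| := by
  -- symmetry facts
  have hRsym : ∀ i, (R i)ᵀ = R i := fun i => by have h := (hR i).isHermitian; simp at h; exact h.eq
  have hRinvsym : ∀ i, (Rinv i)ᵀ = Rinv i := by
    intro i
    have h1 : (Rinv i)ᵀ * R i = 1 := by
      have h := congrArg Matrix.transpose (hRinv i)
      rwa [Matrix.transpose_mul, Matrix.transpose_one, hRsym i] at h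
    calc (Rinv i)ᵀ = (Rinv i)ᵀ * (R i * Rinv i) := by rw [hRinv i, mul_one]
      _ = ((Rinv i)ᵀ * R i) * Rinv i := by rw [mul_assoc]
      _ = Rinv i := by rw [h1, one_mul]
  have hEsym : ∀ i, (E i)ᵀ = E i := by
    intro i; rw [hE i, Matrix.transpose_sub, hRinvsym, hRinvsym]
  -- Ax = U sbar
  have hAx : A *ᵥ x = U *ᵥ sbar := by
    rw [hx, hsbar, Matrix.mulVec_mulVec, Matrix.mulVec_mulVec, hAV]
  have hUv : U *ᵥ sbar = ∑ j, sbar j • u j := by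
    ext l
    simp [Matrix.mulVec, dotProduct, hU, Finset.sum_apply, mul_comm]
  set y : Fin m → ℝ := A *ᵥ x - r0 with hy
  have hdot : ∀ i, u i ⬝ᵥ y = sbar i - (if i = 0 then β else 0) := by
    intro i
    rw [hy, dotProduct_sub, hAx, hUv, hr0]
    have h1 : u i ⬝ᵥ ∑ j, sbar j • u j = sbar i := by
      have e : u i ⬝ᵥ ∑ j, sbar j • u j = ∑ j, sbar j * (u i ⬝ᵥ u j) := by
        simp only [dotProduct, Finset.sum_apply, Pi.smul_apply, smul_eq_mul, Finset.mul_sum]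
        rw [Finset.sum_comm]
        exact Finset.sum_congr rfl fun j _ => Finset.sum_congr rfl fun l _ => by ring
      rw [e]
      simp [hu]
    have h2 : u i ⬝ᵥ (β • u 0) = if i = 0 then β else 0 := by
      rw [dotProduct_smul, hu, smul_eq_mul]
      split <;> simp
    rw [h1, h2]
  -- transpose of the sum matrix
  have hST : (∑ i, vecMulVec (u i) (u i) * E i)ᵀ = ∑ i, E i * vecMulVec (u i) (u i) := by
    rw [Matrix.transpose_sum]
    refine Finset.sum_congr rfl fun i _ => ?_
    rw [Matrix.transpose_mul, hEsym]
    congr 1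
    ext a b
    simp [vecMulVec_apply, mul_comm]
  have hmat : Errᵀ * Rinv (Fin.last k) = Aᵀ * ∑ i, E i * vecMulVec (u i) (u i) := by
    rw [hErr, Matrix.transpose_mul, Matrix.transpose_mul, hST, hRsym,
      Matrix.mul_assoc (Aᵀ) _ (Rinv (Fin.last k)),
      Matrix.mul_assoc _ (R (Fin.last k)) (Rinv (Fin.last k)), hRinv, mul_one]
  -- the difference vector
  have key : Aᵀ *ᵥ (Rinv (Fin.last k) *ᵥ y) - (A + Err)ᵀ *ᵥ (Rinv (Fin.last k) *ᵥ y)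
      = Aᵀ *ᵥ (E 0 *ᵥ r0) + ∑ i, (-sbar i) • ((Aᵀ * E i) *ᵥ u i) := by
    have hLHS : Aᵀ *ᵥ (Rinv (Fin.last k) *ᵥ y) - (A + Err)ᵀ *ᵥ (Rinv (Fin.last k) *ᵥ y)
        = -(Errᵀ *ᵥ (Rinv (Fin.last k) *ᵥ y)) := by
      rw [Matrix.transpose_add, Matrix.add_mulVec]
      abel
    rw [hLHS, Matrix.mulVec_mulVec, hmat, ← Matrix.mulVec_mulVec, sum_mulVec8]
    have hterm : ∀ i, (E i * vecMulVec (u i) (u i)) *ᵥ y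
        = (u i ⬝ᵥ y) • (E i *ᵥ u i) := by
      intro i
      rw [← Matrix.mulVec_mulVec, vecMulVec_mulVec8, Matrix.mulVec_smul]
    simp only [hterm, hdot]
    rw [mulVec_sum8]
    simp only [Matrix.mulVec_smul]
    rw [← Finset.sum_neg_distrib]
    have hsplit : ∀ i : Fin (k+1),
        -((sbar i - if i = 0 then β else 0) • (Aᵀ *ᵥ (E i *ᵥ u i)))
        = (if i = 0 then β else 0) • (Aᵀ *ᵥ (E i *ᵥ u i))
          + (-sbar i) • (Aᵀ *ᵥ (E i *ᵥ u i)) := by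
      intro i
      have hc : -(sbar i - if i = 0 then β else 0)
          = (if i = 0 then β else 0) + (-sbar i) := by ring
      rw [← neg_smul, hc, add_smul]
    simp only [hsplit]
    rw [Finset.sum_add_distrib]
    congr 1
    · simp only [ite_smul, zero_smul]
      rw [Finset.sum_ite_eq' Finset.univ (0 : Fin (k+1))]
      simp [hr0, Matrix.mulVec_smul]
    · refine Finset.sum_congr rfl fun i _ => ?_
      rw [← Matrix.mulVec_mulVec]
  rw [key]
  refine le_trans (enorm8_add_le _ _) ?_
  gcongr
  refine le_trans (enorm8_sum_le _ _) ?_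
  apply Finset.sum_le_sum
  intro i _
  have hui : enorm8 (u i) = 1 := by
    have h1 : u i ⬝ᵥ u i = 1 := by simpa using hu i i
    rw [enorm8, EuclideanSpace.norm_eq]
    simp only [WithLp.equiv_symm_apply, WithLp.ofLp_toLp, Real.norm_eq_abs, sq_abs]
    rw [show ∑ j, u i j ^ 2 = u i ⬝ᵥ u i from by simp [dotProduct, sq], h1, Real.sqrt_one]
  have hb := enorm8_mulVec_le (Aᵀ * E i) (u i)
  rw [hui, mul_one] at hb
  calc enorm8 ((-sbar i) • ((Aᵀ * E i) *ᵥ u i))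
      = |sbar i| * enorm8 ((Aᵀ * E i) *ᵥ u i) := by rw [enorm8_smul, abs_neg]
    _ ≤ |sbar i| * opnorm8 (Aᵀ * E i) := mul_le_mul_of_nonneg_left hb (abs_nonneg _)
    _ = opnorm8 (Aᵀ * E i) * |sbar i| := mul_comm _ _
end

section
/- Under the flexible Golub–Kahan relations A V_k = U_{k+1} M_k and Aᵀ R̄_{k+1} U_{k+1} = V_{k+1} T_{k+1} (V_{k+1} orthonormal columns, first k columns V_k; r₀ = β u₁), the stationarity condition V_kᵀAᵀR̄^{(S)}_{k+1}A V_k s_k = V_kᵀAᵀR̄^{(S)}_{k+1} r₀ is equivalent to (T_{k,k+1}M_k + (T_{k,k+1}M_k)ᵀ) s_k = β t_{1,1} e₁ + M_kᵀ Y_{k+1}ᵀ r₀, where Y_{k+1} = R̄_{k+1} U_{k+1}, T_{k,k+1} is T_{k+1} without its last row, and t_{1,1} = [T_{k+1}]_{1,1}. -/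
open Matrix

/-- Under the flexible Golub–Kahan relations, the stationarity condition
`VkᵀAᵀR̄^{(S)}A Vk s = VkᵀAᵀR̄^{(S)} r₀` is equivalent to the projected system
`(T_{k,k+1}M_k + (T_{k,k+1}M_k)ᵀ) s = β t_{1,1} e₁ + Mᵀ Y_{k+1}ᵀ r₀`. -/
theorem stmt12 (m n k : ℕ) (hk : 0 < k)
    (A : Matrix (Fin m) (Fin n) ℝ)
    (U : Matrix (Fin m) (Fin (k + 1)) ℝ) (hU : Uᵀ * U = 1)
    (V : Matrix (Fin n) (Fin (k + 1)) ℝ) (hV : Vᵀ * V = 1)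
    (Vk : Matrix (Fin n) (Fin k) ℝ) (hVk : ∀ i j, Vk i j = V i j.castSucc)
    (M : Matrix (Fin (k + 1)) (Fin k) ℝ)
    (T : Matrix (Fin (k + 1)) (Fin (k + 1)) ℝ)
    (hT : ∀ i j : Fin (k + 1), (j : ℕ) < (i : ℕ) → T i j = 0)
    (Tk : Matrix (Fin k) (Fin (k + 1)) ℝ) (hTk : ∀ i j, Tk i j = T i.castSucc j)
    (Rbar : Matrix (Fin m) (Fin m) ℝ)
    (RbarS : Matrix (Fin m) (Fin m) ℝ)
    (hRbarS : RbarS = (1 / 2 : ℝ) • (Rbar + Rbarᵀ))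
    (Y : Matrix (Fin m) (Fin (k + 1)) ℝ) (hY : Y = Rbar * U)
    (h1 : A * Vk = U * M) (h2 : Aᵀ * Rbar * U = V * T)
    (β : ℝ) (r0 : Fin m → ℝ) (hr0 : r0 = β • (fun i => U i 0))
    (s : Fin k → ℝ) :
    (Vkᵀ * Aᵀ * RbarS * A * Vk) *ᵥ s = (Vkᵀ * Aᵀ * RbarS) *ᵥ r0 ↔
      (Tk * M + (Tk * M)ᵀ) *ᵥ s
        = (β * T 0 0) • (Pi.single (⟨0, hk⟩ : Fin k) 1 : Fin k → ℝ)
          + (Mᵀ * Yᵀ) *ᵥ r0 := by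
  have hAVk : Vkᵀ * Aᵀ = Mᵀ * Uᵀ := by
    rw [← transpose_mul, h1, transpose_mul]
  -- key : Vkᵀ * (V * T) = Tk
  have hVT : Vᵀ * (V * T) = T := by rw [← Matrix.mul_assoc, hV, Matrix.one_mul]
  have key1 : Vkᵀ * (V * T) = Tk := by
    ext i j
    have h := congrFun (congrFun hVT i.castSucc) j
    simp only [mul_apply, transpose_apply] at h ⊢
    rw [hTk]
    rw [← h]
    exact Finset.sum_congr rfl (fun x _ => by rw [hVk])
  have key2 : Vkᵀ * Aᵀ * Rbar * U = Tk := by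
    rw [Matrix.mul_assoc, Matrix.mul_assoc, ← Matrix.mul_assoc Aᵀ, h2, key1]
  have e1 : Vkᵀ * Aᵀ * Rbar * A * Vk = Tk * M := by
    rw [Matrix.mul_assoc, h1, ← Matrix.mul_assoc, key2]
  have e2 : Vkᵀ * Aᵀ * Rbarᵀ * A * Vk = (Tk * M)ᵀ := by
    have h := congrArg Matrix.transpose e1
    simpa [transpose_mul, Matrix.mul_assoc] using h
  have hMat : Vkᵀ * Aᵀ * RbarS * A * Vk = (1 / 2 : ℝ) • (Tk * M + (Tk * M)ᵀ) := by
    rw [hRbarS, Matrix.mul_smul, Matrix.smul_mul, Matrix.smul_mul, Matrix.mul_add,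
      Matrix.add_mul, Matrix.add_mul, e1, e2]
  -- vector side
  have hr0' : r0 = β • (U *ᵥ Pi.single (0 : Fin (k+1)) 1) := by
    rw [hr0]
    congr 1
    ext i
    simp [mulVec_single]
  have hTke : Tk *ᵥ Pi.single (0 : Fin (k+1)) 1
      = T 0 0 • (Pi.single (⟨0, hk⟩ : Fin k) 1 : Fin k → ℝ) := by
    ext i
    rw [mulVec_single]
    by_cases hi : i = ⟨0, hk⟩
    · subst hi
      simp [hTk]
    · have hi' : (0 : ℕ) < (i : ℕ) := by
        rcases Nat.eq_zero_or_pos (i : ℕ) with h0 | h0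
        · exact absurd (Fin.ext h0) hi
        · exact h0
      have : T i.castSucc 0 = 0 := hT _ _ (by simpa using hi')
      simp [hTk, this, Pi.single_apply, hi]
  have termA : (Vkᵀ * Aᵀ * Rbar) *ᵥ r0
      = (β * T 0 0) • (Pi.single (⟨0, hk⟩ : Fin k) 1 : Fin k → ℝ) := by
    rw [hr0', mulVec_smul, mulVec_mulVec, key2, hTke, smul_smul]
  have termB : (Vkᵀ * Aᵀ * Rbarᵀ) *ᵥ r0 = (Mᵀ * Yᵀ) *ᵥ r0 := by
    rw [hY, transpose_mul, ← Matrix.mul_assoc, hAVk]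
  have hvec : (Vkᵀ * Aᵀ * RbarS) *ᵥ r0
      = (1 / 2 : ℝ) • ((β * T 0 0) • (Pi.single (⟨0, hk⟩ : Fin k) 1 : Fin k → ℝ)
          + (Mᵀ * Yᵀ) *ᵥ r0) := by
    rw [hRbarS, Matrix.mul_smul, smul_mulVec, Matrix.mul_add, add_mulVec, termA, termB]
  rw [hMat, hvec, smul_mulVec]
  exact (smul_right_injective (Fin k → ℝ) (by norm_num : (1 / 2 : ℝ) ≠ 0)).eq_iff
end

section
/- (DAP-LSMR projected system) Under the inexact Golub–Kahan relations A V_k = U_{k+1} M_k, (A+𝓔_{k+1}^{(k)})ᵀR_{k+1}^{-1}U_{k+1} = V_{k+1}T_{k+1}, with V_{k+1} orthonormal columns, r₀ = βu₁, the condition (A+𝓔_{k+1}^{(k)})ᵀR_{k+1}^{-1}(A V_k s_k − r₀) ⊥ (A+𝓔_{k+1}^{(k)})ᵀR_{k+1}^{-1}A·range(V_k) is equivalent to (T_{k+1}M_k)ᵀ(T_{k+1}M_k) s_k = β t_{1,1} (T_{k+1}M_k)ᵀ e₁. -/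
open Matrix

/-- DAP-LSMR projected system: under the inexact Golub–Kahan relations, the
orthogonality of `(A+𝓔)ᵀR⁻¹(A Vk s − r₀)` to `(A+𝓔)ᵀR⁻¹A·range(V_k)` is
equivalent to `(T_{k+1}M_k)ᵀ(T_{k+1}M_k) s = β t_{1,1} (T_{k+1}M_k)ᵀ e₁`. -/
theorem stmt19 (m n k : ℕ)
    (A Err : Matrix (Fin m) (Fin n) ℝ)
    (R : Matrix (Fin m) (Fin m) ℝ) (hR : R.PosDef)
    (U : Matrix (Fin m) (Fin (k + 1)) ℝ) (hU : Uᵀ * U = 1)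
    (V : Matrix (Fin n) (Fin (k + 1)) ℝ) (hV : Vᵀ * V = 1)
    (Vk : Matrix (Fin n) (Fin k) ℝ) (hVk : ∀ i j, Vk i j = V i j.castSucc)
    (M : Matrix (Fin (k + 1)) (Fin k) ℝ)
    (T : Matrix (Fin (k + 1)) (Fin (k + 1)) ℝ)
    (hT : ∀ i j : Fin (k + 1), (j : ℕ) < (i : ℕ) → T i j = 0)
    (h1 : A * Vk = U * M) (h2 : (A + Err)ᵀ * R⁻¹ * U = V * T)
    (β : ℝ) (r0 : Fin m → ℝ) (hr0 : r0 = β • (fun i => U i 0))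
    (s : Fin k → ℝ) :
    (∀ c : Fin k → ℝ,
        (((A + Err)ᵀ * R⁻¹) *ᵥ (A *ᵥ (Vk *ᵥ s) - r0)) ⬝ᵥ
          (((A + Err)ᵀ * R⁻¹ * A * Vk) *ᵥ c) = 0) ↔
      ((T * M)ᵀ * (T * M)) *ᵥ s
        = (β * T 0 0) • ((T * M)ᵀ *ᵥ
            (Pi.single (0 : Fin (k + 1)) 1 : Fin (k + 1) → ℝ)) := by
  set B := (A + Err)ᵀ * R⁻¹ with hB
  set N := T * M with hN
  set e : Fin (k + 1) → ℝ := Pi.single 0 1 with he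
  set w : Fin (k + 1) → ℝ := N *ᵥ s - (β * T 0 0) • e with hw
  -- orthonormality dot product
  have key : ∀ x y : Fin (k + 1) → ℝ, (V *ᵥ x) ⬝ᵥ (V *ᵥ y) = x ⬝ᵥ y := by
    intro x y
    rw [Matrix.dotProduct_mulVec, ← Matrix.mulVec_transpose,
      Matrix.mulVec_mulVec, hV, Matrix.one_mulVec]
  -- T e = T 0 0 • e
  have hTe : T *ᵥ e = T 0 0 • e := by
    funext i
    simp only [he, Matrix.mulVec_single, Pi.smul_apply, Pi.single_apply]
    by_cases h : i = 0
    · subst h; simp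
    · rw [show T.col 0 i = T i 0 from rfl, hT i 0 (by simpa using Fin.pos_of_ne_zero h)]
      simp [if_neg h]
  -- B A Vk = V * N
  have hBAVk : B * A * Vk = V * N := by
    rw [Matrix.mul_assoc, h1, ← Matrix.mul_assoc, hB, h2, Matrix.mul_assoc, hN]
  -- first factor
  have hfst : B *ᵥ (A *ᵥ (Vk *ᵥ s) - r0) = V *ᵥ w := by
    rw [Matrix.mulVec_sub, hw, Matrix.mulVec_sub]
    congr 1
    · have h3 : B *ᵥ (A *ᵥ (Vk *ᵥ s)) = (B * A * Vk) *ᵥ s := by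
        simp [Matrix.mulVec_mulVec, Matrix.mul_assoc]
      rw [h3, hBAVk, ← Matrix.mulVec_mulVec]
    · have hr0' : r0 = β • (U *ᵥ e) := by
        rw [hr0]; funext i; simp [he, Matrix.mulVec_single]
      rw [hr0', Matrix.mulVec_smul, Matrix.mulVec_mulVec, hB, h2,
        ← Matrix.mulVec_mulVec, hTe, Matrix.mulVec_smul, Matrix.mulVec_smul,
        smul_smul]
  constructor
  · intro h
    have horth : Nᵀ *ᵥ w = 0 := by
      funext j
      have hj := h (Pi.single j 1)
      rw [hfst, hBAVk] at hj
      rw [← Matrix.mulVec_mulVec] at hj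
      rw [key] at hj
      have : w ⬝ᵥ (N *ᵥ Pi.single j 1) = (Nᵀ *ᵥ w) j := by
        simp [Matrix.mulVec, dotProduct, Matrix.transpose_apply,
          Pi.single_apply, mul_comm]
      rw [this] at hj
      simpa using hj
    have : Nᵀ *ᵥ (N *ᵥ s) - (β * T 0 0) • (Nᵀ *ᵥ e) = 0 := by
      rw [← Matrix.mulVec_smul, ← Matrix.mulVec_sub, ← hw]
      exact horth
    rw [← Matrix.mulVec_mulVec]
    exact sub_eq_zero.mp this
  · intro h c
    rw [hfst, hBAVk, ← Matrix.mulVec_mulVec, key]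
    have horth : Nᵀ *ᵥ w = 0 := by
      rw [hw, Matrix.mulVec_sub, Matrix.mulVec_smul, Matrix.mulVec_mulVec]
      rw [h]
      simp
    calc w ⬝ᵥ (N *ᵥ c) = (Nᵀ *ᵥ w) ⬝ᵥ c := by
          rw [Matrix.dotProduct_mulVec, ← Matrix.mulVec_transpose]
      _ = 0 := by rw [horth]; simp
end
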